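/- Let m > d ≥ 1 and 0 < r_1 < r_2. For every k ∈ ℤ, b ∈ ℝ^d, and every x ∈ ℝ^m such that |x_j| ≤ r_1/√(m−d) for all j ∈ {d+1, …, m}, the extended wavelet agrees with the d-dimensional wavelet evaluated at the first d coordinates: Ψ_{k,b}(x) = ψ_{k,b}(x_1, …, x_d). -/

import Mathlib

open MeasureTheory

/-- The rectifier (ReLU) function. -/
noncomputable def rect (x : ℝ) : ℝ := max 0 x

/-- The trapezoid function `t`: equal to 2 on [-1,1], vanishing outside (-3,3), linear between. -/
noncomputable def trap (x : ℝ) : ℝ := rect (x + 3) - rect (x + 1) - rect (x - 1) + rect (x - 3)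

/-- The scaling ("father") function `φ(x) = C_d · rect(Σ_j t(x_j) − 2(d−1))` on `ℝ^d`. -/
noncomputable def scalingFn (d : ℕ) (Cd : ℝ) (x : EuclideanSpace ℝ (Fin d)) : ℝ :=
  Cd * rect ((∑ j, trap (x j)) - 2 * ((d : ℝ) - 1))

/-- The ("mother") wavelet `ψ(x) = φ(x) − 2⁻¹ φ(2^{−1/d} x)`. -/
noncomputable def psiFn (d : ℕ) (Cd : ℝ) (x : EuclideanSpace ℝ (Fin d)) : ℝ :=
  scalingFn d Cd x - 2⁻¹ * scalingFn d Cd (((2 : ℝ) ^ (-(1 : ℝ) / d)) • x)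

/-- The wavelet term `ψ_{k,b}(x) = 2^{k/2} ψ(2^{k/d}(x − b))`. -/
noncomputable def psikb (d : ℕ) (Cd : ℝ) (k : ℤ) (b x : EuclideanSpace ℝ (Fin d)) : ℝ :=
  (2 : ℝ) ^ ((k : ℝ) / 2) * psiFn d Cd (((2 : ℝ) ^ ((k : ℝ) / d)) • (x - b))

/-- The trapezoid `t_r` of height 2, equal to 2 on `[−α,α]` and vanishing outside `(−β,β)`. -/
noncomputable def trapr (a b x : ℝ) : ℝ :=
  (2 / (b - a)) * (rect (x + b) - rect (x + a) - rect (x - a) + rect (x - b))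

/-- The extended scaling function `φ_r^{k,b} : ℝ^m → ℝ`. -/
noncomputable def extScaling (m d : ℕ) (Cd r1 r2 : ℝ) (k : ℤ) (b : Fin d → ℝ)
    (x : EuclideanSpace ℝ (Fin m)) : ℝ :=
  Cd * rect ((∑ j : Fin m,
      if h : (j : ℕ) < d then trap ((2 : ℝ) ^ ((k : ℝ) / d) * (x j - b ⟨j, h⟩))
      else trapr (r1 / Real.sqrt ((m : ℝ) - d)) (r2 / Real.sqrt ((m : ℝ) - d)) (x j)) -
    2 * ((m : ℝ) - 1))

/-- The extended wavelet `Ψ_{k,b}(x) = 2^{k/2}(φ_r^{k,b}(x) − 2⁻¹ φ_r^{k−1,b}(x))`. -/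
noncomputable def extPsi (m d : ℕ) (Cd r1 r2 : ℝ) (k : ℤ) (b : Fin d → ℝ)
    (x : EuclideanSpace ℝ (Fin m)) : ℝ :=
  (2 : ℝ) ^ ((k : ℝ) / 2) *
    (extScaling m d Cd r1 r2 k b x - 2⁻¹ * extScaling m d Cd r1 r2 (k - 1) b x)

/-! On the slab `|x_j| ≤ α` (`j ≥ d`) each of the last `m − d` trapezoids `t_r(x_j)` equals 2, so
together they contribute `2(m − d)`, exactly the difference of the offsets `2(m − 1)` and `2(d − 1)`.
Hence `φ_r^{k,b}(x) = φ(2^{k/d}(x' − b))` with `x'` the first `d` coordinates, and the scale `k − 1`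
is the scale `k` followed by the dilation `2^{−1/d}` occurring in `ψ`. -/

theorem Fin.sum_dite_val_lt_of_eq_const {M : Type*} [AddCommMonoid M] {d m : ℕ} (hdm : d ≤ m)
    (g : (j : Fin m) → (j : ℕ) < d → M) (e : Fin m → M) (c : M)
    (he : ∀ j : Fin m, d ≤ (j : ℕ) → e j = c) :
    ∑ j : Fin m, (if h : (j : ℕ) < d then g j h else e j) =
      ∑ i : Fin d, g (Fin.castLE hdm i) i.isLt + (m - d) • c := by
  obtain ⟨n, rfl⟩ := Nat.exists_eq_add_of_le hdm
  rw [Fin.sum_univ_add, Nat.add_sub_cancel_left]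
  congr 1
  · exact Finset.sum_congr rfl fun i _ => dif_pos i.isLt
  · rw [Finset.sum_congr rfl fun i _ => ?_, Finset.sum_const, Finset.card_univ, Fintype.card_fin]
    have hi : d ≤ (Fin.natAdd d i : ℕ) := Nat.le_add_right d i
    rw [dif_neg (not_lt.mpr hi), he _ hi]

theorem trapr_eq_two_of_abs_le {a b x : ℝ} (hab : a < b) (hx : |x| ≤ a) : trapr a b x = 2 := by
  obtain ⟨hxa, hax⟩ := abs_le.mp hx
  rw [trapr, rect, rect, rect, rect, max_eq_right (by linarith : (0 : ℝ) ≤ x + b),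
    max_eq_right (by linarith : (0 : ℝ) ≤ x + a), max_eq_left (by linarith : x - a ≤ 0),
    max_eq_left (by linarith : x - b ≤ 0), show x + b - (x + a) - 0 + 0 = b - a by ring,
    div_mul_cancel₀ _ (sub_ne_zero.mpr hab.ne')]

theorem extScaling_eq_scalingFn {m d : ℕ} (hdm : d < m) (Cd : ℝ) {r1 r2 : ℝ} (hr12 : r1 < r2)
    (k : ℤ) (b : Fin d → ℝ) (x : EuclideanSpace ℝ (Fin m))
    (hx : ∀ j : Fin m, d ≤ (j : ℕ) → |x j| ≤ r1 / Real.sqrt ((m : ℝ) - d)) :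
    extScaling m d Cd r1 r2 k b x =
      scalingFn d Cd ((2 : ℝ) ^ ((k : ℝ) / d) •
        (WithLp.toLp 2 (fun j : Fin d => x (Fin.castLE hdm.le j)) - WithLp.toLp 2 b)) := by
  have hsqrt : 0 < Real.sqrt ((m : ℝ) - d) :=
    Real.sqrt_pos.mpr (sub_pos.mpr (Nat.cast_lt.mpr hdm))
  have hab := (div_lt_div_iff_of_pos_right hsqrt).mpr hr12
  rw [extScaling, scalingFn, Fin.sum_dite_val_lt_of_eq_const hdm.le _ _ 2
    fun j hj => trapr_eq_two_of_abs_le hab (hx j hj), nsmul_eq_mul, Nat.cast_sub hdm.le]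
  simp only [PiLp.smul_apply, PiLp.sub_apply, smul_eq_mul, Fin.val_castLE, Fin.eta]
  congr 2
  ring

theorem Real.rpow_intCast_sub_one_div {a : ℝ} (ha : 0 < a) (k : ℤ) (d : ℕ) :
    a ^ (((k - 1 : ℤ) : ℝ) / d) = a ^ (-(1 : ℝ) / d) * a ^ ((k : ℝ) / d) := by
  rw [← Real.rpow_add ha]
  congr 1
  push_cast
  ring

theorem statement15_general (m d : ℕ) (hdm : d < m) (Cd : ℝ)
    (r1 r2 : ℝ) (hr12 : r1 < r2)
    (k : ℤ) (b : Fin d → ℝ) (x : EuclideanSpace ℝ (Fin m))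
    (hx : ∀ j : Fin m, d ≤ (j : ℕ) → |x j| ≤ r1 / Real.sqrt ((m : ℝ) - d)) :
    extPsi m d Cd r1 r2 k b x =
      psikb d Cd k (WithLp.toLp 2 b) (WithLp.toLp 2 (fun j : Fin d => x (Fin.castLE hdm.le j))) := by
  rw [extPsi, extScaling_eq_scalingFn hdm Cd hr12 k b x hx,
    extScaling_eq_scalingFn hdm Cd hr12 (k - 1) b x hx, Real.rpow_intCast_sub_one_div two_pos,
    mul_smul, psikb, psiFn]

/-- when `|x_j| ≤ r₁/√(m−d)` for all the last `m − d` coordinates, the extended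
wavelet agrees with the `d`-dimensional wavelet evaluated at the first `d` coordinates. -/
theorem statement15 (m d : ℕ) (hd : 1 ≤ d) (hdm : d < m) (Cd : ℝ) (hCd : 0 < Cd)
    (hnorm : ∫ x : EuclideanSpace ℝ (Fin d), scalingFn d Cd x = 1)
    (r1 r2 : ℝ) (hr1 : 0 < r1) (hr12 : r1 < r2)
    (k : ℤ) (b : Fin d → ℝ) (x : EuclideanSpace ℝ (Fin m))
    (hx : ∀ j : Fin m, d ≤ (j : ℕ) → |x j| ≤ r1 / Real.sqrt ((m : ℝ) - d)) :
    extPsi m d Cd r1 r2 k b x =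
      psikb d Cd k (WithLp.toLp 2 b) (WithLp.toLp 2 (fun j : Fin d => x (Fin.castLE hdm.le j))) :=
  statement15_general m d hdm Cd r1 r2 hr12 k b x hx
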